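/- Equal-norm representation for sum-regularized networks: consider the objective Θ ↦ ∑_{i=1}^n ‖y_i − g_Θ(x_i)‖₂² + r·∑_{j=0}^L ‖Θ^j‖₁ over all parameters, with nonnegative-homogeneous activations and r > 0. If the all-zeros parameter is not a solution, then there exists a solution Θ̃ with ‖Θ̃⁰‖₁ = ‖Θ̃¹‖₁ = ⋯ = ‖Θ̃^L‖₁. -/
import Mathlib


/-- Inner part of the network: `netH j x = f^j[Θ^{j-1} ⋯ f¹[Θ⁰ x]]`. -/
def netH (p : ℕ → ℕ)
    (Θ : ∀ k, Matrix (Fin (p (k + 1))) (Fin (p k)) ℝ)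
    (f : ∀ k, (Fin (p k) → ℝ) → (Fin (p k) → ℝ)) :
    (j : ℕ) → (Fin (p 0) → ℝ) → (Fin (p j) → ℝ)
  | 0 => fun x => x
  | j + 1 => fun x => f (j + 1) ((Θ j).mulVec (netH p Θ f j x))

/-- Entrywise ℓ1-norm of a matrix. -/
def norm1 {a b : ℕ} (M : Matrix (Fin a) (Fin b) ℝ) : ℝ :=
  ∑ i, ∑ k, |M i k|

/-- The sum-regularized least-squares objective
`∑ᵢ ‖yᵢ − Θ^L f^L[⋯]xᵢ‖₂² + r ∑_{j=0}^{L} ‖Θ^j‖₁`. -/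
def objSum (L m n : ℕ) (p : ℕ → ℕ)
    (f : ∀ k, (Fin (p k) → ℝ) → (Fin (p k) → ℝ))
    (x : Fin n → Fin (p 0) → ℝ) (y : Fin n → Fin m → ℝ) (r : ℝ)
    (AL : Matrix (Fin m) (Fin (p L)) ℝ)
    (A : ∀ k, Matrix (Fin (p (k + 1))) (Fin (p k)) ℝ) : ℝ :=
  (∑ i, ∑ j, (y i j - AL.mulVec (netH p A f L (x i)) j) ^ 2)
    + r * (norm1 AL + ∑ j ∈ Finset.range L, norm1 (A j))

@[simp] lemma norm1_zero {a b : ℕ} : norm1 (0 : Matrix (Fin a) (Fin b) ℝ) = 0 := by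
  simp [norm1]

lemma norm1_nonneg {a b : ℕ} (M : Matrix (Fin a) (Fin b) ℝ) : 0 ≤ norm1 M :=
  Finset.sum_nonneg fun _ _ => Finset.sum_nonneg fun _ _ => abs_nonneg _

lemma norm1_smul {a b : ℕ} {c : ℝ} (hc : 0 ≤ c) (M : Matrix (Fin a) (Fin b) ℝ) :
    norm1 (c • M) = c * norm1 M := by
  simp [norm1, Finset.mul_sum, abs_mul, abs_of_nonneg hc]

lemma norm1_eq_zero {a b : ℕ} {M : Matrix (Fin a) (Fin b) ℝ} (h : norm1 M = 0) : M = 0 := by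
  ext i k
  have h1 : ∀ i ∈ Finset.univ, ∑ k, |M i k| = 0 :=
    (Finset.sum_eq_zero_iff_of_nonneg fun _ _ =>
      Finset.sum_nonneg fun _ _ => abs_nonneg _).mp h
  have h2 : ∀ k ∈ Finset.univ, |M i k| = 0 :=
    (Finset.sum_eq_zero_iff_of_nonneg fun _ _ => abs_nonneg _).mp
      (h1 i (Finset.mem_univ i))
  simpa using abs_eq_zero.mp (h2 k (Finset.mem_univ k))

/-- equal-norm representation for sum-regularized networks: with
nonnegative-homogeneous activations and `r > 0`, if a global minimizer exists
and the all-zeros parameter is not a solution, then there exists a solution all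
of whose layers have the same entrywise ℓ1-norm. -/
theorem exists_equal_norm_solution (L m n : ℕ) (hL : 1 ≤ L) (p : ℕ → ℕ)
    (f : ∀ k, (Fin (p k) → ℝ) → (Fin (p k) → ℝ))
    (hhom : ∀ k (a : ℝ), 0 ≤ a → ∀ b, f k (a • b) = a • f k b)
    (x : Fin n → Fin (p 0) → ℝ) (y : Fin n → Fin m → ℝ)
    (r : ℝ) (hr : 0 < r)
    (hexists : ∃ (TL : Matrix (Fin m) (Fin (p L)) ℝ)
      (T : ∀ k, Matrix (Fin (p (k + 1))) (Fin (p k)) ℝ),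
        ∀ BL B, objSum L m n p f x y r TL T ≤ objSum L m n p f x y r BL B)
    (hzero : ∃ (BL : Matrix (Fin m) (Fin (p L)) ℝ)
      (B : ∀ k, Matrix (Fin (p (k + 1))) (Fin (p k)) ℝ),
        objSum L m n p f x y r BL B < objSum L m n p f x y r 0 (fun _ => 0)) :
    ∃ (TL : Matrix (Fin m) (Fin (p L)) ℝ)
      (T : ∀ k, Matrix (Fin (p (k + 1))) (Fin (p k)) ℝ),
        (∀ BL B, objSum L m n p f x y r TL T ≤ objSum L m n p f x y r BL B) ∧
        ∀ j < L, norm1 (T j) = norm1 TL := by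
  obtain ⟨TL, T, hmin⟩ := hexists
  obtain ⟨BL, B, hB⟩ := hzero
  have fzero : ∀ k, f k (0 : Fin (p k) → ℝ) = 0 := by
    intro k
    have := hhom k 0 le_rfl 0
    simpa using this
  -- if some layer (below L) is zero, the inner network output at any stage past it is zero
  have netzero : ∀ (A : ∀ k, Matrix (Fin (p (k + 1))) (Fin (p k)) ℝ) (j0 : ℕ),
      A j0 = 0 → ∀ j, j0 < j → ∀ xx, netH p A f j xx = 0 := by
    intro A j0 hA j
    induction j with
    | zero => omega
    | succ j ih =>
      intro hj xx
      rcases Nat.lt_or_ge j0 j with h | h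
      · simp only [netH, ih h, Matrix.mulVec_zero, fzero]
      · have hj0 : j0 = j := by omega
        subst hj0
        simp only [netH, hA, Matrix.zero_mulVec, fzero]
  set v : ℕ → ℝ := fun k => if k < L then norm1 (T k) else norm1 TL with hv
  -- every layer norm is positive
  have hvnonneg : ∀ k, 0 ≤ v k := by
    intro k; simp only [hv]; split <;> exact norm1_nonneg _
  have hpos : ∀ k ≤ L, 0 < v k := by
    intro k hk
    rcases (hvnonneg k).lt_or_eq with h | h
    · exact h
    -- otherwise the corresponding matrix is zero, so the output equals the all-zero output
    exfalso
    have hout : ∀ i, TL.mulVec (netH p T f L (x i)) = 0 := by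
      intro i
      rcases Nat.lt_or_ge k L with hkL | hkL
      · have hTk : T k = 0 := by
          apply norm1_eq_zero
          simpa only [hv, if_pos hkL] using h.symm
        rw [netzero T k hTk L hkL, Matrix.mulVec_zero]
      · have hkL' : ¬ k < L := by omega
        have hTL : TL = 0 := by
          apply norm1_eq_zero
          simpa only [hv, if_neg hkL'] using h.symm
        rw [hTL, Matrix.zero_mulVec]
    have hdata : objSum L m n p f x y r 0 (fun _ => 0) ≤ objSum L m n p f x y r TL T := by
      unfold objSum
      have hzm : ∀ i j, (0 : Matrix (Fin m) (Fin (p L)) ℝ).mulVec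
          (netH p (fun _ => 0) f L (x i)) j = 0 := by
        intro i j; rw [Matrix.zero_mulVec]; rfl
      have hd : (∑ i, ∑ j, (y i j - (0 : Matrix (Fin m) (Fin (p L)) ℝ).mulVec
            (netH p (fun _ => 0) f L (x i)) j) ^ 2)
          = ∑ i, ∑ j, (y i j - TL.mulVec (netH p T f L (x i)) j) ^ 2 := by
        refine Finset.sum_congr rfl fun i _ => Finset.sum_congr rfl fun j _ => ?_
        rw [hzm i j, hout i]
        rfl
      rw [hd]
      have : (0 : ℝ) ≤ r * (norm1 TL + ∑ j ∈ Finset.range L, norm1 (T j)) := by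
        apply mul_nonneg hr.le
        exact add_nonneg (norm1_nonneg _)
          (Finset.sum_nonneg fun _ _ => norm1_nonneg _)
      simp only [norm1_zero, Finset.sum_const_zero, add_zero, mul_zero]
      linarith
    have := hmin BL B
    linarith
  -- geometric mean and rescaling factors
  set P : ℝ := ∏ k ∈ Finset.range (L + 1), v k with hP
  have hPpos : 0 < P :=
    Finset.prod_pos fun k hk => hpos k (by simpa using Nat.lt_succ_iff.mp (Finset.mem_range.mp hk))
  set c : ℝ := P ^ (((L + 1 : ℕ) : ℝ)⁻¹) with hc
  have hcpos : 0 < c := Real.rpow_pos_of_pos hPpos _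
  set s : ℕ → ℝ := fun k => c / v k with hs
  have hspos : ∀ k ≤ L, 0 < s k := fun k hk => div_pos hcpos (hpos k hk)
  have hcpow : c ^ (L + 1) = P := Real.rpow_inv_natCast_pow hPpos.le (by omega)
  have hprod : ∏ k ∈ Finset.range (L + 1), s k = 1 := by
    simp only [hs]
    rw [Finset.prod_div_distrib, Finset.prod_const, Finset.card_range, hcpow, ← hP]
    exact div_self hPpos.ne'
  -- the rescaled parameters
  set T' : ∀ k, Matrix (Fin (p (k + 1))) (Fin (p k)) ℝ :=
    fun k => if k < L then s k • T k else T k with hT'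
  set TL' : Matrix (Fin m) (Fin (p L)) ℝ := s L • TL with hTL'
  -- the inner network scales
  have key : ∀ j, j ≤ L → ∀ xx,
      netH p T' f j xx = (∏ k ∈ Finset.range j, s k) • netH p T f j xx := by
    intro j
    induction j with
    | zero => intro _ xx; simp [netH]
    | succ j ih =>
      intro hj xx
      have hjL : j < L := by omega
      have hprodnn : 0 ≤ ∏ k ∈ Finset.range j, s k :=
        Finset.prod_nonneg fun k hk =>
          (hspos k (by have := Finset.mem_range.mp hk; omega)).le
      simp only [netH, ih (by omega) xx]
      rw [hT']
      simp only [if_pos hjL]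
      rw [Matrix.smul_mulVec, Matrix.mulVec_smul, smul_smul,
        hhom (j + 1) _ (mul_nonneg (hspos j hjL.le).le hprodnn),
        Finset.prod_range_succ, mul_comm]
  -- outputs agree
  have hout : ∀ xx, TL'.mulVec (netH p T' f L xx) = TL.mulVec (netH p T f L xx) := by
    intro xx
    rw [key L le_rfl xx, hTL', Matrix.smul_mulVec, Matrix.mulVec_smul, smul_smul,
      mul_comm, ← Finset.prod_range_succ, hprod, one_smul]
  -- norms of rescaled layers
  have hnorm' : ∀ j < L, norm1 (T' j) = c := by
    intro j hj
    rw [hT']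
    simp only [if_pos hj]
    rw [norm1_smul (hspos j hj.le).le]
    have : v j = norm1 (T j) := by simp [hv, if_pos hj]
    rw [hs, ← this]
    exact div_mul_cancel₀ c (hpos j hj.le).ne'
  have hnormL : norm1 TL' = c := by
    rw [hTL', norm1_smul (hspos L le_rfl).le]
    have : v L = norm1 TL := by simp [hv]
    rw [hs, ← this]
    exact div_mul_cancel₀ c (hpos L le_rfl).ne'
  -- AM-GM: (L+1) * c ≤ ∑ v k
  have hamgm : (L + 1 : ℝ) * c ≤ ∑ k ∈ Finset.range (L + 1), v k := by
    have h := Real.geom_mean_le_arith_mean_weighted (Finset.range (L + 1))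
      (fun _ => (((L + 1 : ℕ) : ℝ))⁻¹) v
      (fun _ _ => by positivity)
      (by
        rw [Finset.sum_const, Finset.card_range, nsmul_eq_mul]
        rw [mul_inv_cancel₀ (by positivity)])
      (fun k _ => hvnonneg k)
    have hlhs : ∏ k ∈ Finset.range (L + 1), v k ^ (((L + 1 : ℕ) : ℝ))⁻¹ = c := by
      rw [Real.finset_prod_rpow _ _ (fun k _ => hvnonneg k), ← hP, hc]
    rw [hlhs, ← Finset.mul_sum] at h
    have hLpos : (0 : ℝ) < ((L + 1 : ℕ) : ℝ) := by positivity
    rw [show ((L + 1 : ℝ)) = ((L + 1 : ℕ) : ℝ) by push_cast; ring]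
    calc ((L + 1 : ℕ) : ℝ) * c ≤ ((L + 1 : ℕ) : ℝ) * ((((L + 1 : ℕ) : ℝ))⁻¹ *
          ∑ k ∈ Finset.range (L + 1), v k) := by
          exact mul_le_mul_of_nonneg_left h hLpos.le
      _ = ∑ k ∈ Finset.range (L + 1), v k := by field_simp
  -- the rescaled parameters are also a minimizer
  have hobj : objSum L m n p f x y r TL' T' ≤ objSum L m n p f x y r TL T := by
    unfold objSum
    have hd : (∑ i, ∑ j, (y i j - TL'.mulVec (netH p T' f L (x i)) j) ^ 2)
        = ∑ i, ∑ j, (y i j - TL.mulVec (netH p T f L (x i)) j) ^ 2 := by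
      refine Finset.sum_congr rfl fun i _ => Finset.sum_congr rfl fun j _ => ?_
      rw [hout (x i)]
    rw [hd]
    have hpen' : norm1 TL' + ∑ j ∈ Finset.range L, norm1 (T' j) = ((L + 1 : ℝ)) * c := by
      rw [hnormL, Finset.sum_congr rfl fun j hj => hnorm' j (Finset.mem_range.mp hj),
        Finset.sum_const, Finset.card_range, nsmul_eq_mul]
      ring
    have hpen : norm1 TL + ∑ j ∈ Finset.range L, norm1 (T j)
        = ∑ k ∈ Finset.range (L + 1), v k := by
      rw [Finset.sum_range_succ]
      have h1 : v L = norm1 TL := by simp [hv]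
      have h2 : ∀ k ∈ Finset.range L, v k = norm1 (T k) := fun k hk => by
        simp [hv, Finset.mem_range.mp hk]
      rw [h1, Finset.sum_congr rfl h2]
      ring
    rw [hpen', hpen]
    have := mul_le_mul_of_nonneg_left hamgm hr.le
    linarith
  refine ⟨TL', T', fun BL' B' => le_trans hobj (hmin BL' B'), fun j hj => ?_⟩
  rw [hnorm' j hj, hnormL]
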